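/- For all k ≥ 1, T(2,2k-1;k) > T(2,2k-1;k-1). -/

import Mathlib

/-- Two grid squares (given as (row, column) pairs) are adjacent if they agree in one
coordinate and differ by one in the other. -/
def Adj (p q : ℕ × ℕ) : Prop :=
  (p.1 = q.1 ∧ (p.2 + 1 = q.2 ∨ q.2 + 1 = p.2)) ∨
  (p.2 = q.2 ∧ (p.1 + 1 = q.1 ∨ q.1 + 1 = p.1))

instance : DecidableRel Adj := fun _ _ => by unfold Adj; infer_instance

/-- `T m n k` is the number of ways to select `k` squares from an `m × n` grid with
no two selected squares horizontally or vertically adjacent. -/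
def T (m n k : ℕ) : ℕ :=
  (((Finset.range m ×ˢ Finset.range n).powersetCard k).filter
    (fun s => ∀ p ∈ s, ∀ q ∈ s, ¬ Adj p q)).card

/-! Let `U(n, k)` count the independent `k`-sets of the `2 × n` grid avoiding the corner
`(0, n - 1)`. Splitting on the last column gives `T(n+1, k+1) = U(n, k) + U(n+1, k+1)` and, by the
symmetry between the two rows, `U(n+1, k+1) = U(n, k) + T(n, k+1)`. Hence `U` obeys the Delannoy
recurrence, `U(a + b, a) = D(a, b)`, and `T(2, a+b+1; a+1) = D(a, b) + D(a+1, b)`. For `n = 2k - 1`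
and `k ≥ 2` the claim becomes `D(k-2, k) + D(k-1, k) < D(k-1, k-1) + D(k, k-1)`, which follows
from the symmetry of `D` and the inequality `D(a, b+1) < D(a+1, b)` for `a < b`. -/

open Finset

def delannoy : ℕ → ℕ → ℕ
  | 0, _ => 1
  | _ + 1, 0 => 1
  | a + 1, b + 1 => delannoy a (b + 1) + delannoy (a + 1) b + delannoy a b

theorem delannoy_zero_left (b : ℕ) : delannoy 0 b = 1 := by
  rw [delannoy]

theorem delannoy_zero_right (a : ℕ) : delannoy a 0 = 1 := by
  cases a <;> rw [delannoy]

theorem delannoy_comm : ∀ a b, delannoy a b = delannoy b a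
  | 0, 0 | 0, _ + 1 | _ + 1, 0 => by simp [delannoy]
  | a + 1, b + 1 => by
    simp only [delannoy, delannoy_comm a (b + 1), delannoy_comm (a + 1) b, delannoy_comm a b]
    ring

theorem delannoy_lt_delannoy {a b : ℕ} (h : a < b) :
    delannoy a (b + 1) < delannoy (a + 1) b := by
  match a, b, h with
  | 0, b + 1, _ => simp [delannoy]
  | a + 1, b + 2, h =>
    have h₁ := delannoy_lt_delannoy (a := a) (b := b + 2) (by omega)
    have h₂ := delannoy_lt_delannoy (a := a) (b := b + 1) (by omega)
    have h₃ : delannoy (a + 1) (b + 2) ≤ delannoy (a + 2) (b + 1) := by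
      rcases (by omega : a < b ∨ a = b) with hab | rfl
      · exact (delannoy_lt_delannoy (a := a + 1) (b := b + 1) (by omega)).le
      · exact (delannoy_comm _ _).le
    rw [delannoy.eq_3 a, delannoy.eq_3 (a + 1) (b + 1)]
    ring_nf at h₁ h₂ h₃ ⊢
    omega
termination_by a + b

theorem Adj.symm {p q : ℕ × ℕ} (h : Adj p q) : Adj q p := by
  unfold Adj at *; omega

theorem Adj.irrefl (p : ℕ × ℕ) : ¬ Adj p p := by
  unfold Adj; omega

theorem adj_of_snd_eq {p q : ℕ × ℕ} (hp : p.1 < 2) (hq : q.1 < 2) (h : p.2 = q.2)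
    (hne : p ≠ q) : Adj p q := by
  have : p.1 ≠ q.1 := fun h' => hne (Prod.ext h' h)
  unfold Adj; omega

def IsIndep (s : Finset (ℕ × ℕ)) : Prop := ∀ p ∈ s, ∀ q ∈ s, ¬ Adj p q

theorem IsIndep.subset {s t : Finset (ℕ × ℕ)} (ht : IsIndep t) (h : s ⊆ t) : IsIndep s :=
  fun p hp q hq => ht p (h hp) q (h hq)

theorem isIndep_insert {a : ℕ × ℕ} {s : Finset (ℕ × ℕ)} :
    IsIndep (insert a s) ↔ IsIndep s ∧ ∀ q ∈ s, ¬ Adj a q := by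
  simp only [IsIndep, forall_mem_insert, Adj.irrefl, not_false_eq_true, true_and]
  constructor
  · rintro ⟨ha, hs⟩
    exact ⟨fun p hp => (hs p hp).2, ha⟩
  · rintro ⟨hs, ha⟩
    exact ⟨ha, fun p hp => ⟨fun h => ha p hp h.symm, hs p hp⟩⟩

def gridIndepSets (m n k : ℕ) : Finset (Finset (ℕ × ℕ)) :=
  ((range m ×ˢ range n).powersetCard k).filter (fun s => ∀ p ∈ s, ∀ q ∈ s, ¬ Adj p q)

theorem T_eq_card_gridIndepSets (m n k : ℕ) : T m n k = #(gridIndepSets m n k) := rfl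

theorem mem_gridIndepSets {m n k : ℕ} {s : Finset (ℕ × ℕ)} :
    s ∈ gridIndepSets m n k ↔ (∀ p ∈ s, p.1 < m ∧ p.2 < n) ∧ #s = k ∧ IsIndep s := by
  simp only [gridIndepSets, mem_filter, mem_powersetCard, subset_iff, mem_product, mem_range,
    IsIndep, and_assoc]

theorem T_zero_right (m n : ℕ) : T m n 0 = 1 := by
  rw [T_eq_card_gridIndepSets, card_eq_one]
  refine ⟨∅, eq_singleton_iff_unique_mem.2 ⟨?_, fun s hs => ?_⟩⟩
  · simp [mem_gridIndepSets, IsIndep]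
  · exact card_eq_zero.1 (mem_gridIndepSets.1 hs).2.1

theorem card_le_of_mem_gridIndepSets_two {n k : ℕ} {s : Finset (ℕ × ℕ)}
    (hs : s ∈ gridIndepSets 2 n k) : k ≤ n := by
  obtain ⟨hcells, rfl, hindep⟩ := mem_gridIndepSets.1 hs
  simpa using card_le_card_of_injOn Prod.snd (t := range n)
    (fun p hp => mem_range.2 (hcells p hp).2)
    (fun p hp q hq h => by_contra fun hne => hindep p hp q hq
      (adj_of_snd_eq (hcells p hp).1 (hcells q hq).1 h hne))

theorem T_two_eq_zero_of_lt {n k : ℕ} (h : n < k) : T 2 n k = 0 := by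
  rw [T_eq_card_gridIndepSets, card_eq_zero, eq_empty_iff_forall_notMem]
  exact fun s hs => (card_le_of_mem_gridIndepSets_two hs).not_gt h

def cornerFree (n k : ℕ) : ℕ := #{s ∈ gridIndepSets 2 n k | (0, n - 1) ∉ s}

theorem filter_notMem_lastCol (n k : ℕ) :
    {s ∈ gridIndepSets 2 (n + 1) k | (0, n) ∉ s ∧ (1, n) ∉ s} = gridIndepSets 2 n k := by
  ext s
  simp only [mem_filter, mem_gridIndepSets]
  constructor
  · rintro ⟨⟨hcells, hcard, hindep⟩, h₀, h₁⟩
    refine ⟨fun p hp => ⟨(hcells p hp).1, ?_⟩, hcard, hindep⟩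
    by_contra hn
    obtain ⟨r, c⟩ := p
    obtain ⟨hr, hc⟩ := hcells _ hp
    obtain rfl : c = n := by simp only at hn hc; omega
    interval_cases r <;> contradiction
  · rintro ⟨hcells, hcard, hindep⟩
    refine ⟨⟨fun p hp => ⟨(hcells p hp).1, (hcells p hp).2.trans n.lt_succ_self⟩, hcard,
      hindep⟩, ?_, ?_⟩ <;> exact fun h => (hcells _ h).2.false.elim

theorem card_filter_mem_lastCol {r : ℕ} (hr : r < 2) (n k : ℕ) :
    #{s ∈ gridIndepSets 2 (n + 1) (k + 1) | (r, n) ∈ s} =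
      #{s ∈ gridIndepSets 2 n k | (r, n - 1) ∉ s} := by
  refine card_nbij' (·.erase (r, n)) (insert (r, n)) ?_ ?_ ?_ ?_
  · intro s hs
    simp only [mem_coe, mem_filter, mem_gridIndepSets] at hs ⊢
    obtain ⟨⟨hcells, hcard, hindep⟩, hrn⟩ := hs
    refine ⟨⟨fun p hp => ?_, by rw [card_erase_of_mem hrn, hcard]; rfl,
      hindep.subset (erase_subset _ _)⟩, fun h => ?_⟩
    · obtain ⟨hne, hp⟩ := mem_erase.1 hp
      refine ⟨(hcells p hp).1, (Nat.lt_succ_iff.1 (hcells p hp).2).lt_of_ne fun hpn => ?_⟩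
      exact hindep _ hrn _ hp (adj_of_snd_eq hr (hcells p hp).1 hpn.symm hne.symm)
    · obtain ⟨hne, h⟩ := mem_erase.1 h
      refine hindep _ h _ hrn ?_
      simp only [ne_eq, Prod.mk.injEq, true_and] at hne
      unfold Adj; omega
  · intro s hs
    simp only [mem_coe, mem_filter, mem_gridIndepSets] at hs ⊢
    obtain ⟨⟨hcells, hcard, hindep⟩, hrn⟩ := hs
    have hnot : (r, n) ∉ s := fun h => (hcells _ h).2.false
    refine ⟨⟨?_, by rw [card_insert_of_notMem hnot, hcard],
      isIndep_insert.2 ⟨hindep, fun q hq hadj => ?_⟩⟩, mem_insert_self _ _⟩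
    · simp only [forall_mem_insert]
      exact ⟨⟨hr, n.lt_succ_self⟩,
        fun p hp => ⟨(hcells p hp).1, (hcells p hp).2.trans n.lt_succ_self⟩⟩
    · have hqn := (hcells q hq).2
      obtain ⟨a, c⟩ := q
      obtain ⟨rfl, rfl⟩ : a = r ∧ c = n - 1 := by
        unfold Adj at hadj; simp only at hadj hqn; omega
      exact hrn hq
  · intro s hs
    exact insert_erase (mem_filter.1 hs).2
  · intro s hs
    exact erase_insert fun h => ((mem_gridIndepSets.1 (mem_filter.1 hs).1).1 _ h).2.false

-- `Equiv.swap` rather than `1 - r`, so that `rowSwap` is an involution of all of `ℕ × ℕ`.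
def rowSwap (p : ℕ × ℕ) : ℕ × ℕ := (Equiv.swap 0 1 p.1, p.2)

theorem rowSwap_involutive : Function.Involutive rowSwap := fun p => by
  simp [rowSwap]

theorem rowSwap_fst {p : ℕ × ℕ} (hp : p.1 < 2) : (rowSwap p).1 = 1 - p.1 := by
  obtain ⟨r, c⟩ := p
  simp only at hp
  interval_cases r <;> simp [rowSwap]

theorem adj_rowSwap {p q : ℕ × ℕ} (hp : p.1 < 2) (hq : q.1 < 2) :
    Adj (rowSwap p) (rowSwap q) ↔ Adj p q := by
  have := rowSwap_fst hp; have := rowSwap_fst hq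
  unfold Adj; simp only [rowSwap] at *; omega

theorem image_rowSwap_mem_gridIndepSets {n k : ℕ} {s : Finset (ℕ × ℕ)}
    (hs : s ∈ gridIndepSets 2 n k) : s.image rowSwap ∈ gridIndepSets 2 n k := by
  obtain ⟨hcells, hcard, hindep⟩ := mem_gridIndepSets.1 hs
  refine mem_gridIndepSets.2
    ⟨?_, by rw [card_image_of_injective _ rowSwap_involutive.injective, hcard], ?_⟩
  · simp only [forall_mem_image]
    intro p hp
    have := rowSwap_fst (hcells p hp).1
    exact ⟨by omega, (hcells p hp).2⟩
  · simp only [IsIndep, forall_mem_image]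
    intro p hp q hq
    rw [adj_rowSwap (hcells p hp).1 (hcells q hq).1]
    exact hindep p hp q hq

theorem mem_image_rowSwap {s : Finset (ℕ × ℕ)} {p : ℕ × ℕ} :
    p ∈ s.image rowSwap ↔ rowSwap p ∈ s := by
  constructor
  · intro h
    obtain ⟨q, hq, rfl⟩ := mem_image.1 h
    rwa [rowSwap_involutive]
  · exact fun h => mem_image.2 ⟨_, h, rowSwap_involutive p⟩

theorem card_filter_notMem_row_one_eq_row_zero (n k c : ℕ) :
    #{s ∈ gridIndepSets 2 n k | (1, c) ∉ s} = #{s ∈ gridIndepSets 2 n k | (0, c) ∉ s} := by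
  have image_image_rowSwap (s : Finset (ℕ × ℕ)) : (s.image rowSwap).image rowSwap = s := by
    rw [image_image, rowSwap_involutive.comp_self, image_id]
  refine card_nbij' (·.image rowSwap) (·.image rowSwap) ?_ ?_
    (fun s _ => image_image_rowSwap s) (fun s _ => image_image_rowSwap s) <;>
  · intro s hs
    simp only [mem_coe, mem_filter, mem_image_rowSwap] at hs ⊢
    simpa [rowSwap] using ⟨image_rowSwap_mem_gridIndepSets hs.1, hs.2⟩

theorem T_two_succ_succ (n k : ℕ) :
    T 2 (n + 1) (k + 1) = cornerFree n k + cornerFree (n + 1) (k + 1) := by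
  rw [T_eq_card_gridIndepSets, ← card_filter_add_card_filter_not (fun s => (0, n) ∈ s),
    card_filter_mem_lastCol two_pos]
  rfl

theorem cornerFree_succ_succ (n k : ℕ) :
    cornerFree (n + 1) (k + 1) = cornerFree n k + T 2 n (k + 1) := by
  have hsplit := card_filter_add_card_filter_not
    (s := {s ∈ gridIndepSets 2 (n + 1) (k + 1) | (0, n) ∉ s}) (fun s => (1, n) ∈ s)
  rw [filter_filter, filter_filter, filter_notMem_lastCol] at hsplit
  have hbottom : {s ∈ gridIndepSets 2 (n + 1) (k + 1) | (0, n) ∉ s ∧ (1, n) ∈ s} =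
      {s ∈ gridIndepSets 2 (n + 1) (k + 1) | (1, n) ∈ s} :=
    filter_congr fun s hs => and_iff_right_of_imp fun h₁ h₀ =>
      (mem_gridIndepSets.1 hs).2.2 _ h₀ _ h₁ (by unfold Adj; omega)
  rw [hbottom, card_filter_mem_lastCol one_lt_two, card_filter_notMem_row_one_eq_row_zero]
    at hsplit
  exact hsplit.symm

theorem cornerFree_zero_right (n : ℕ) : cornerFree n 0 = 1 := by
  rw [cornerFree, filter_true_of_mem, ← T_eq_card_gridIndepSets, T_zero_right]
  intro s hs
  rw [card_eq_zero.1 (mem_gridIndepSets.1 hs).2.1]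
  exact notMem_empty _

theorem cornerFree_add_eq_delannoy : ∀ a b, cornerFree (a + b) a = delannoy a b
  | 0, b => by rw [zero_add, cornerFree_zero_right, delannoy_zero_left]
  | a + 1, 0 => by
    have h := cornerFree_add_eq_delannoy a 0
    rw [add_zero] at h ⊢
    rw [cornerFree_succ_succ, T_two_eq_zero_of_lt a.lt_succ_self, h, delannoy_zero_right,
      delannoy_zero_right]
  | a + 1, b + 1 => by
    have h₁ : cornerFree (a + b + 1) a = delannoy a (b + 1) :=
      cornerFree_add_eq_delannoy a (b + 1)
    have h₂ := cornerFree_add_eq_delannoy a b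
    have h₃ := cornerFree_add_eq_delannoy (a + 1) b
    rw [Nat.add_right_comm] at h₃
    rw [show a + 1 + (b + 1) = a + b + 1 + 1 by ring, cornerFree_succ_succ, T_two_succ_succ,
      delannoy, h₁, h₂, h₃]
    ring

theorem T_two_eq_delannoy (a b : ℕ) :
    T 2 (a + b + 1) (a + 1) = delannoy a b + delannoy (a + 1) b := by
  rw [T_two_succ_succ, cornerFree_add_eq_delannoy, ← cornerFree_add_eq_delannoy (a + 1) b,
    Nat.add_right_comm]

theorem T2_odd_row_step (k : ℕ) (hk : 1 ≤ k) :
    T 2 (2 * k - 1) (k - 1) < T 2 (2 * k - 1) k := by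
  obtain ⟨j, rfl⟩ : ∃ j, k = j + 1 := ⟨k - 1, by omega⟩
  rcases j with _ | i
  · rw [T_zero_right, T_two_eq_delannoy 0 0, delannoy_zero_left, delannoy_zero_right]
    norm_num
  · have h_low : T 2 (2 * (i + 2) - 1) (i + 1) =
        delannoy i (i + 2) + delannoy (i + 1) (i + 2) := by
      rw [← T_two_eq_delannoy]; congr 1; omega
    have h_high : T 2 (2 * (i + 2) - 1) (i + 2) =
        delannoy (i + 1) (i + 1) + delannoy (i + 2) (i + 1) := by
      rw [← T_two_eq_delannoy]; congr 1; omega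
    rw [Nat.add_sub_cancel, h_low, h_high, delannoy_comm (i + 1) (i + 2)]
    exact Nat.add_lt_add_right (delannoy_lt_delannoy i.lt_succ_self) _
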